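/- arXiv:0708.1155 — 2 statements merged into one kernel-verified Lean document; each statement's English description precedes it below -/
import Mathlib

section
/- Let μ > 1/4. Then the operator L_μ admits no positive local super-harmonic: for every ρ ∈ (0, ρ₀) there is no function h ∈ C²(Ω_ρ) with h > 0 on Ω_ρ and −Δh(x) − (μ/δ(x)²)h(x) ≥ 0 for all x ∈ Ω_ρ. (Theorem 2.2, nonexistence direction.) -/
open Set Metric MeasureTheory Real

noncomputable section

/-- Distance to the boundary of `Ω`. -/
def bdist {N : ℕ} (Ω : Set (EuclideanSpace ℝ (Fin N))) (x : EuclideanSpace ℝ (Fin N)) : ℝ :=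
  Metric.infDist x Ωᶜ

/-- The collar `Ω_ρ = {x ∈ Ω : δ(x) < ρ}`. -/
def collar {N : ℕ} (Ω : Set (EuclideanSpace ℝ (Fin N))) (ρ : ℝ) :
    Set (EuclideanSpace ℝ (Fin N)) :=
  {x ∈ Ω | bdist Ω x < ρ}

/-- The ring `Ω_{ε,ρ} = {x ∈ Ω : ε < δ(x) < ρ}`. -/
def ring' {N : ℕ} (Ω : Set (EuclideanSpace ℝ (Fin N))) (ε ρ : ℝ) :
    Set (EuclideanSpace ℝ (Fin N)) :=
  {x ∈ Ω | ε < bdist Ω x ∧ bdist Ω x < ρ}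

/-- The Laplacian. -/
def lap {N : ℕ} (f : EuclideanSpace ℝ (Fin N) → ℝ) (x : EuclideanSpace ℝ (Fin N)) : ℝ :=
  ∑ i : Fin N, fderiv ℝ (fun y => fderiv ℝ f y (EuclideanSpace.single i 1)) x
    (EuclideanSpace.single i 1)

/-- `ρ₀` is a good collar width: `δ` is `C²` on `Ω_{ρ₀}`, `|∇δ| = 1` there, `Δδ` bounded. -/
def GoodCollar {N : ℕ} (Ω : Set (EuclideanSpace ℝ (Fin N))) (ρ₀ : ℝ) : Prop :=
  0 < ρ₀ ∧ ContDiffOn ℝ 2 (bdist Ω) (collar Ω ρ₀) ∧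
    (∀ x ∈ collar Ω ρ₀, ‖gradient (bdist Ω) x‖ = 1) ∧
    ∃ M, ∀ x ∈ collar Ω ρ₀, |lap (bdist Ω) x| ≤ M

/-- A super-harmonic of `L_μ = -Δ - μ/δ²` on `G`. -/
def SuperHarm {N : ℕ} (Ω : Set (EuclideanSpace ℝ (Fin N))) (μ : ℝ)
    (G : Set (EuclideanSpace ℝ (Fin N))) (h : EuclideanSpace ℝ (Fin N) → ℝ) : Prop :=
  ContDiffOn ℝ 2 h G ∧ ∀ x ∈ G, 0 ≤ -(lap h x) - μ / (bdist Ω x) ^ 2 * h x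

/-- A sub-harmonic of `L_μ = -Δ - μ/δ²` on `G`. -/
def SubHarm {N : ℕ} (Ω : Set (EuclideanSpace ℝ (Fin N))) (μ : ℝ)
    (G : Set (EuclideanSpace ℝ (Fin N))) (h : EuclideanSpace ℝ (Fin N) → ℝ) : Prop :=
  ContDiffOn ℝ 2 h G ∧ ∀ x ∈ G, -(lap h x) - μ / (bdist Ω x) ^ 2 * h x ≤ 0

/-- A positive local super-harmonic of `L_μ`, defined on the collar `Ω_σ`. -/
def PosSuperHarmOn {N : ℕ} (Ω : Set (EuclideanSpace ℝ (Fin N))) (μ σ : ℝ)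
    (h : EuclideanSpace ℝ (Fin N) → ℝ) : Prop :=
  SuperHarm Ω μ (collar Ω σ) h ∧ ∀ x ∈ collar Ω σ, 0 < h x

/-- A sub-solution of `(*)`: `-Δu - (μ/δ²)u + u^p/δ^s = 0` on `G`. -/
def SubSol {N : ℕ} (Ω : Set (EuclideanSpace ℝ (Fin N))) (μ s p : ℝ)
    (G : Set (EuclideanSpace ℝ (Fin N))) (u : EuclideanSpace ℝ (Fin N) → ℝ) : Prop :=
  ContDiffOn ℝ 2 u G ∧ (∀ x ∈ G, 0 ≤ u x) ∧
    ∀ x ∈ G, -(lap u x) - μ / (bdist Ω x) ^ 2 * u x + (u x) ^ p / (bdist Ω x) ^ s ≤ 0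

/-- A super-solution of `(*)` on `G`. -/
def SuperSol {N : ℕ} (Ω : Set (EuclideanSpace ℝ (Fin N))) (μ s p : ℝ)
    (G : Set (EuclideanSpace ℝ (Fin N))) (u : EuclideanSpace ℝ (Fin N) → ℝ) : Prop :=
  ContDiffOn ℝ 2 u G ∧ (∀ x ∈ G, 0 < u x) ∧
    ∀ x ∈ G, 0 ≤ -(lap u x) - μ / (bdist Ω x) ^ 2 * u x + (u x) ^ p / (bdist Ω x) ^ s

/-- A regularized distance `(d, c)` on `Ω`. -/
def RegDist {N : ℕ} (Ω : Set (EuclideanSpace ℝ (Fin N))) (d : EuclideanSpace ℝ (Fin N) → ℝ)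
    (c : ℝ) : Prop :=
  1 ≤ c ∧ ContDiffOn ℝ 2 d Ω ∧ (∀ x ∈ Ω, 0 < d x) ∧
    (∀ x ∈ Ω, c⁻¹ * bdist Ω x ≤ d x ∧ d x ≤ c * bdist Ω x) ∧
    (∀ x ∈ Ω, ‖gradient d x‖ ≤ c) ∧ (∀ x ∈ Ω, |lap d x| ≤ c / d x)

/-! Pick `ω > 0` with `ω² < μ - 1/4`. The profile `φ(t) = √t (1 - cos (ω log (t / a)))` satisfies
`φ'' + μ φ / t² > 0` on one oscillation `a < t < a e^{2π/ω}` and vanishes at both ends, because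
`t^{1/2 ± iω}` solve `φ'' + (1/4 + ω²) φ / t² = 0`. Near `∂Ω`, where `|∇δ| = 1` and `Δδ` is bounded,
`v = φ ∘ δ` is then a strict sub-solution, `L_μ v < 0`, on the thin ring `a < δ < a e^{2π/ω}`, and
vanishes on its boundary. If `h > 0` were super-harmonic, then at a maximum point `w` of `v / h` on
the closed ring the function `T h - v` (`T = v w / h w`) has an interior local minimum, so
`Δ(T h - v)(w) ≥ 0`; together with `L_μ (T h) ≥ 0` this gives `L_μ v (w) ≥ 0`. -/

open Filter Topology

theorem Filter.Eventually.exists_pos_mul {P : ℝ → Prop} (hP : ∀ᶠ b in 𝓝 0, P b) (κ : ℝ) :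
    ∃ a > 0, P (a * κ) :=
  let ⟨a, hPa, ha⟩ := ((((continuous_mul_const κ).tendsto' 0 0 (zero_mul κ)).mono_left
    nhdsWithin_le_nhds).eventually hP).and (self_mem_nhdsWithin (s := Ioi 0)) |>.exists
  ⟨a, ha, hPa⟩

theorem Bornology.IsBounded.compl_nonempty {E : Type*} [NormedAddCommGroup E] [NormedSpace ℝ E]
    [Nontrivial E] {s : Set E} (hs : Bornology.IsBounded s) : sᶜ.Nonempty :=
  nonempty_compl.2 fun h => NormedSpace.unbounded_univ ℝ E (h ▸ hs)

theorem exists_isLocalMin_mul_sub {X : Type*} [TopologicalSpace X] {K G : Set X}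
    (hK : IsCompact K) (hG : IsOpen G) (hGK : G ⊆ K) {h v : X → ℝ} (hh : ContinuousOn h K)
    (hhpos : ∀ x ∈ K, 0 < h x) (hv : ContinuousOn v K) (hv0 : ∀ x ∈ K \ G, v x ≤ 0) {y : X}
    (hy : y ∈ K) (hvy : 0 < v y) :
    ∃ w ∈ G, ∃ T : ℝ, 0 < T ∧ T * h w = v w ∧ IsLocalMin (fun x => T * h x - v x) w := by
  obtain ⟨w, hwK, hmax⟩ := hK.exists_isMaxOn ⟨y, hy⟩ (hv.div hh fun x hx => (hhpos x hx).ne')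
  have hT : 0 < v w / h w := (div_pos hvy (hhpos y hy)).trans_le (hmax hy)
  have hwG : w ∈ G := by_contra fun hw =>
    (hv0 w ⟨hwK, hw⟩).not_gt ((div_pos_iff_of_pos_right (hhpos w hwK)).1 hT)
  refine ⟨w, hwG, v w / h w, hT, div_mul_cancel₀ _ (hhpos w hwK).ne', ?_⟩
  filter_upwards [hG.mem_nhds hwG] with x hx
  have hle : v x ≤ v w / h w * h x := (div_le_iff₀ (hhpos x (hGK hx))).1 (hmax (hGK hx))
  rw [div_mul_cancel₀ _ (hhpos w hwK).ne']
  linarith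

section Calculus

variable {E : Type*} [NormedAddCommGroup E] [NormedSpace ℝ E]

theorem deriv_deriv_nonneg_of_isLocalMin {f : ℝ → ℝ} {t : ℝ} (hmin : IsLocalMin f t)
    (hf : ContinuousAt f t) : 0 ≤ deriv (deriv f) t := by
  by_contra! hneg
  have hmax := isLocalMax_of_deriv_deriv_neg hneg hmin.deriv_eq_zero hf
  have hconst : f =ᶠ[𝓝 t] fun _ => f t :=
    (hmin.and hmax).mono fun _ hs => le_antisymm hs.2 hs.1
  have hderiv : deriv f =ᶠ[𝓝 t] fun _ => 0 :=
    hconst.eventually_nhds.mono fun _ (hs : f =ᶠ[𝓝 _] _) => by rw [hs.deriv_eq, deriv_const]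
  rw [hderiv.deriv_eq, deriv_const] at hneg
  exact hneg.false

theorem ContDiffAt.differentiableAt_fderiv_apply {F : E → ℝ} {x : E}
    (hF : ContDiffAt ℝ 2 F x) (e : E) : DifferentiableAt ℝ (fun y => fderiv ℝ F y e) x :=
  ((hF.fderiv_right (m := 1) le_rfl).differentiableAt one_ne_zero).clm_apply
    (differentiableAt_const e)

theorem ContDiffAt.eventually_differentiableAt {F : E → ℝ} {x : E}
    (hF : ContDiffAt ℝ 2 F x) : ∀ᶠ y in 𝓝 x, DifferentiableAt ℝ F y :=
  (hF.eventually (by simp)).mono fun _ hy => hy.differentiableAt two_ne_zero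

theorem fderiv_fderiv_apply_nonneg_of_isLocalMin {F : E → ℝ} {x : E}
    (hF : ContDiffAt ℝ 2 F x) (hmin : IsLocalMin F x) (e : E) :
    0 ≤ fderiv ℝ (fun y => fderiv ℝ F y e) x e := by
  set ℓ : ℝ → E := fun t => x + t • e
  have hℓ : ∀ t, HasDerivAt ℓ e t := fun t => by
    simpa [ℓ] using ((hasDerivAt_id t).smul_const e).const_add x
  have hℓ0 : x = ℓ 0 := by simp [ℓ]
  have hℓx : Tendsto ℓ (𝓝 0) (𝓝 x) := hℓ0 ▸ (hℓ 0).continuousAt.tendsto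
  have hderiv : deriv (F ∘ ℓ) =ᶠ[𝓝 0] fun t => fderiv ℝ F (ℓ t) e :=
    (hℓx.eventually hF.eventually_differentiableAt).mono fun t ht =>
      (ht.hasFDerivAt.comp_hasDerivAt t (hℓ t)).deriv
  have hsecond : HasDerivAt (fun t => fderiv ℝ F (ℓ t) e)
      (fderiv ℝ (fun y => fderiv ℝ F y e) x e) 0 :=
    (hF.differentiableAt_fderiv_apply e).hasFDerivAt.comp_hasDerivAt_of_eq 0 (hℓ 0) hℓ0
  have hmin' : IsLocalMin F (ℓ 0) := hℓ0 ▸ hmin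
  have key := deriv_deriv_nonneg_of_isLocalMin (hmin'.comp_continuous (hℓ 0).continuousAt)
    (hF.continuousAt.comp_of_eq (hℓ 0).continuousAt hℓ0.symm)
  rwa [hderiv.deriv_eq, hsecond.deriv] at key

end Calculus

section Laplacian

variable {N : ℕ} {x : EuclideanSpace ℝ (Fin N)}

theorem lap_nonneg_of_isLocalMin {F : EuclideanSpace ℝ (Fin N) → ℝ}
    (hF : ContDiffAt ℝ 2 F x) (hmin : IsLocalMin F x) : 0 ≤ lap F x :=
  Finset.sum_nonneg fun _ _ => fderiv_fderiv_apply_nonneg_of_isLocalMin hF hmin _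

theorem lap_const_mul_sub {f g : EuclideanSpace ℝ (Fin N) → ℝ} (hf : ContDiffAt ℝ 2 f x)
    (hg : ContDiffAt ℝ 2 g x) (c : ℝ) :
    lap (fun z => c * f z - g z) x = c * lap f x - lap g x := by
  have hdir : ∀ e, fderiv ℝ (fun y => fderiv ℝ (fun z => c * f z - g z) y e) x e
      = c * fderiv ℝ (fun y => fderiv ℝ f y e) x e - fderiv ℝ (fun y => fderiv ℝ g y e) x e := by
    intro e
    have hfirst : (fun y => fderiv ℝ (fun z => c * f z - g z) y e)
        =ᶠ[𝓝 x] fun y => c * fderiv ℝ f y e - fderiv ℝ g y e := by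
      filter_upwards [hf.eventually_differentiableAt, hg.eventually_differentiableAt]
        with y hfy hgy
      rw [fderiv_fun_sub (hfy.const_mul c) hgy, fderiv_const_mul hfy]
      rfl
    rw [hfirst.fderiv_eq, fderiv_fun_sub ((hf.differentiableAt_fderiv_apply e).const_mul c)
      (hg.differentiableAt_fderiv_apply e), fderiv_const_mul (hf.differentiableAt_fderiv_apply e)]
    rfl
  simp only [lap, hdir, Finset.sum_sub_distrib, Finset.mul_sum]

theorem sum_fderiv_single_sq (f : EuclideanSpace ℝ (Fin N) → ℝ) (x : EuclideanSpace ℝ (Fin N)) :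
    ∑ i, (fderiv ℝ f x (EuclideanSpace.single i 1)) ^ 2 = ‖gradient f x‖ ^ 2 := by
  have hcoord : ∀ i, fderiv ℝ f x (EuclideanSpace.single i 1) = gradient f x i := by
    intro i
    rw [← InnerProductSpace.toDual_symm_apply, gradient, real_inner_comm,
      EuclideanSpace.inner_single_left]
    simp
  simp_rw [hcoord, EuclideanSpace.norm_eq, Real.norm_eq_abs, sq_abs]
  rw [Real.sq_sqrt (by positivity)]

theorem lap_comp {f : EuclideanSpace ℝ (Fin N) → ℝ} {Q Q' : ℝ → ℝ} {q'' : ℝ}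
    (hf : ContDiffAt ℝ 2 f x) (hQ : ∀ᶠ t in 𝓝 (f x), HasDerivAt Q (Q' t) t)
    (hQ' : HasDerivAt Q' q'' (f x)) :
    lap (fun z => Q (f z)) x = q'' * ‖gradient f x‖ ^ 2 + Q' (f x) * lap f x := by
  have hdir : ∀ e, fderiv ℝ (fun y => fderiv ℝ (fun z => Q (f z)) y e) x e
      = q'' * (fderiv ℝ f x e) ^ 2 + Q' (f x) * fderiv ℝ (fun y => fderiv ℝ f y e) x e := by
    intro e
    have hfirst : (fun y => fderiv ℝ (fun z => Q (f z)) y e)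
        =ᶠ[𝓝 x] fun y => Q' (f y) * fderiv ℝ f y e := by
      filter_upwards [hf.eventually_differentiableAt,
        hf.continuousAt.eventually hQ] with y hfy hQy
      have hQf : HasFDerivAt (fun z => Q (f z)) (Q' (f y) • fderiv ℝ f y) y :=
        hQy.comp_hasFDerivAt y hfy.hasFDerivAt
      rw [hQf.fderiv]
      rfl
    have hprod : HasFDerivAt (fun y => Q' (f y) * fderiv ℝ f y e) _ x :=
      (hQ'.comp_hasFDerivAt x (hf.differentiableAt two_ne_zero).hasFDerivAt).mul
        (hf.differentiableAt_fderiv_apply e).hasFDerivAt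
    rw [hfirst.fderiv_eq, hprod.fderiv]
    simp only [add_apply, smul_apply, smul_eq_mul, Function.comp_apply]
    ring
  simp only [lap, hdir, Finset.sum_add_distrib, ← Finset.mul_sum, sum_fderiv_single_sq]

theorem lap_add_mul_nonpos_of_isLocalMin {h v : EuclideanSpace ℝ (Fin N) → ℝ}
    {w : EuclideanSpace ℝ (Fin N)} {T c : ℝ} (hh : ContDiffAt ℝ 2 h w) (hv : ContDiffAt ℝ 2 v w)
    (hT : 0 ≤ T) (htouch : T * h w = v w) (hmin : IsLocalMin (fun x => T * h x - v x) w)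
    (hsuper : 0 ≤ -lap h w - c * h w) : lap v w + c * v w ≤ 0 := by
  have hlap := lap_nonneg_of_isLocalMin ((contDiffAt_const.mul hh).sub hv) hmin
  rw [lap_const_mul_sub hh hv] at hlap
  have hscaled := mul_nonneg hT hsuper
  rw [← htouch]
  linarith

end Laplacian

section BoundaryDistance

variable {N : ℕ} {Ω : Set (EuclideanSpace ℝ (Fin N))}

theorem continuous_bdist : Continuous (bdist Ω) := continuous_infDist_pt _

theorem mem_of_bdist_pos {x : EuclideanSpace ℝ (Fin N)} (hx : 0 < bdist Ω x) : x ∈ Ω :=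
  not_not.1 fun h => hx.ne' (infDist_zero_of_mem h)

theorem bdist_pos_of_mem (hΩo : IsOpen Ω) (hΩc : Ωᶜ.Nonempty) {x : EuclideanSpace ℝ (Fin N)}
    (hx : x ∈ Ω) : 0 < bdist Ω x :=
  (hΩo.isClosed_compl.notMem_iff_infDist_pos hΩc).1 (notMem_compl_iff.2 hx)

theorem isOpen_collar (hΩo : IsOpen Ω) (ρ : ℝ) : IsOpen (collar Ω ρ) :=
  hΩo.inter (isOpen_Iio.preimage continuous_bdist)

theorem isOpen_ring' (hΩo : IsOpen Ω) (a b : ℝ) : IsOpen (ring' Ω a b) :=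
  hΩo.inter (isOpen_Ioo.preimage continuous_bdist)

theorem isCompact_bdist_preimage_Icc (hΩb : Bornology.IsBounded Ω) {a : ℝ} (ha : 0 < a)
    (b : ℝ) : IsCompact (bdist Ω ⁻¹' Icc a b) :=
  isCompact_of_isClosed_isBounded (isClosed_Icc.preimage continuous_bdist)
    (hΩb.subset fun _ hx => mem_of_bdist_pos (ha.trans_le hx.1))

theorem Icc_subset_range_bdist (hΩc : Ωᶜ.Nonempty) (x : EuclideanSpace ℝ (Fin N)) :
    Icc 0 (bdist Ω x) ⊆ range (bdist Ω) :=
  let ⟨z, hz⟩ := hΩc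
  (isPreconnected_range continuous_bdist).Icc_subset ⟨z, infDist_zero_of_mem hz⟩ ⟨x, rfl⟩

theorem exists_lap_add_nonpos_of_superHarm
    (hΩo : IsOpen Ω) (hΩb : Bornology.IsBounded Ω) {μ ρ a b : ℝ} (ha : 0 < a) (hbρ : b < ρ)
    {h v : EuclideanSpace ℝ (Fin N) → ℝ} (hh : SuperHarm Ω μ (collar Ω ρ) h)
    (hhpos : ∀ x ∈ collar Ω ρ, 0 < h x) (hvc : ContinuousOn v (bdist Ω ⁻¹' Icc a b))
    (hv : ∀ x ∈ ring' Ω a b, ContDiffAt ℝ 2 v x)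
    (hv0 : ∀ x, bdist Ω x = a ∨ bdist Ω x = b → v x ≤ 0)
    {y : EuclideanSpace ℝ (Fin N)} (hy : y ∈ ring' Ω a b) (hvy : 0 < v y) :
    ∃ w ∈ ring' Ω a b, lap v w + μ / bdist Ω w ^ 2 * v w ≤ 0 := by
  have hKcollar : bdist Ω ⁻¹' Icc a b ⊆ collar Ω ρ := fun x hx =>
    ⟨mem_of_bdist_pos (ha.trans_le hx.1), hx.2.trans_lt hbρ⟩
  have hGK : ring' Ω a b ⊆ bdist Ω ⁻¹' Icc a b := fun x hx => ⟨hx.2.1.le, hx.2.2.le⟩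
  have hedge : ∀ x ∈ bdist Ω ⁻¹' Icc a b \ ring' Ω a b, v x ≤ 0 := by
    rintro x ⟨⟨hax, hxb⟩, hxG⟩
    refine hv0 x (by_contra fun hne => hxG ⟨mem_of_bdist_pos (ha.trans_le hax), ?_, ?_⟩)
    · exact hax.lt_of_ne fun h => hne (Or.inl h.symm)
    · exact hxb.lt_of_ne fun h => hne (Or.inr h)
  obtain ⟨w, hw, T, hT, htouch, hmin⟩ :=
    exists_isLocalMin_mul_sub (isCompact_bdist_preimage_Icc hΩb ha b) (isOpen_ring' hΩo a b) hGK
      (hh.1.continuousOn.mono hKcollar) (fun x hx => hhpos x (hKcollar hx)) hvc hedge (hGK hy) hvy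
  have hwcollar := hKcollar (hGK hw)
  exact ⟨w, hw, lap_add_mul_nonpos_of_isLocalMin
    (hh.1.contDiffAt ((isOpen_collar hΩo ρ).mem_nhds hwcollar)) (hv w hw) hT.le htouch hmin
    (hh.2 w hwcollar)⟩

end BoundaryDistance

def oscProfile (ω α t : ℝ) : ℝ := √t * (1 - cos (ω * (log t - α)))

def oscProfileDeriv (ω α t : ℝ) : ℝ :=
  ((1 - cos (ω * (log t - α))) / 2 + ω * sin (ω * (log t - α))) / √t

section OscProfile

variable {ω α t : ℝ}

theorem hasDerivAt_mul_log_sub (ω α : ℝ) (ht : 0 < t) :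
    HasDerivAt (fun t => ω * (log t - α)) (ω / t) t := by
  simpa [div_eq_mul_inv] using ((hasDerivAt_log ht.ne').sub_const α).const_mul ω

theorem hasDerivAt_oscProfile (ω α : ℝ) (ht : 0 < t) :
    HasDerivAt (oscProfile ω α) (oscProfileDeriv ω α t) t := by
  have hsqrt : 0 < √t := Real.sqrt_pos.2 ht
  refine ((hasDerivAt_sqrt ht.ne').mul
    ((hasDerivAt_mul_log_sub ω α ht).cos.const_sub 1)).congr_deriv ?_
  rw [oscProfileDeriv]
  field_simp
  rw [Real.sq_sqrt ht.le]
  ring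

theorem hasDerivAt_oscProfileDeriv (ω α : ℝ) (ht : 0 < t) :
    HasDerivAt (oscProfileDeriv ω α)
      ((ω ^ 2 * cos (ω * (log t - α)) - (1 - cos (ω * (log t - α))) / 4) / (t * √t)) t := by
  have hsqrt : 0 < √t := Real.sqrt_pos.2 ht
  have hθ := hasDerivAt_mul_log_sub ω α ht
  refine ((((hθ.cos.const_sub 1).div_const 2).add (hθ.sin.const_mul ω)).div
    (hasDerivAt_sqrt ht.ne') hsqrt.ne').congr_deriv ?_
  simp only [Pi.add_apply]
  field_simp
  rw [Real.sq_sqrt ht.le]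
  ring

theorem contDiffAt_oscProfile (ω α : ℝ) (ht : 0 < t) : ContDiffAt ℝ 2 (oscProfile ω α) t :=
  (contDiffAt_sqrt ht.ne').mul
    (contDiffAt_const.sub ((contDiffAt_const.mul
      ((contDiffAt_log.2 ht.ne').sub contDiffAt_const)).cos))

theorem oscProfile_log_self (ω a : ℝ) : oscProfile ω (log a) a = 0 := by
  simp [oscProfile]

theorem oscProfile_mul_exp (hω : ω ≠ 0) {a : ℝ} (ha : 0 < a) :
    oscProfile ω (log a) (a * exp (2 * π / ω)) = 0 := by
  have hθ : ω * (log (a * exp (2 * π / ω)) - log a) = ((1 : ℤ) : ℝ) * (2 * π) := by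
    rw [log_mul ha.ne' (exp_pos _).ne', log_exp]
    field_simp
    simp
  rw [oscProfile, hθ, cos_int_mul_two_pi, sub_self, mul_zero]

theorem oscProfile_pos (hω : 0 < ω) {a : ℝ} (ha : 0 < a) (hat : a < t)
    (hta : t < a * exp (2 * π / ω)) : 0 < oscProfile ω (log a) t := by
  have ht : 0 < t := ha.trans hat
  have hθ₀ : 0 < ω * (log t - log a) := mul_pos hω (sub_pos.2 (log_lt_log ha hat))
  have hθ₁ : ω * (log t - log a) < 2 * π := by
    have hlog := log_lt_log ht hta
    rw [log_mul ha.ne' (exp_pos _).ne', log_exp] at hlog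
    rw [← lt_div_iff₀' hω]
    linarith
  have hcos : cos (ω * (log t - log a)) < 1 :=
    (cos_le_one _).lt_of_ne fun h => hθ₀.ne'
      ((cos_eq_one_iff_of_lt_of_lt (by linarith [pi_pos]) hθ₁).1 h)
  exact mul_pos (Real.sqrt_pos.2 ht) (sub_pos.2 hcos)

end OscProfile

theorem lap_oscProfile_comp_add_pos {N : ℕ} {f : EuclideanSpace ℝ (Fin N) → ℝ}
    {x : EuclideanSpace ℝ (Fin N)} {ω α μ : ℝ} (hf : ContDiffAt ℝ 2 f x)
    (hgrad : ‖gradient f x‖ = 1) (hfx : 0 < f x) (hω : 0 < ω) (hωμ : ω ^ 2 ≤ μ - 1 / 4)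
    {M : ℝ} (hM : |lap f x| ≤ M) (hsmall : f x * M * (1 + ω) ≤ ω ^ 2 / 2) :
    0 < lap (fun z => oscProfile ω α (f z)) x + μ / f x ^ 2 * oscProfile ω α (f x) := by
  have hQ : ∀ᶠ t in 𝓝 (f x), HasDerivAt (oscProfile ω α) (oscProfileDeriv ω α t) t :=
    (eventually_gt_nhds hfx).mono fun t ht => hasDerivAt_oscProfile ω α ht
  rw [lap_comp hf hQ (hasDerivAt_oscProfileDeriv ω α hfx), hgrad, oscProfileDeriv, oscProfile]
  generalize f x = t at *
  generalize lap f x = L at *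
  set c := cos (ω * (log t - α))
  set s := sin (ω * (log t - α))
  have hsqrt : 0 < √t := Real.sqrt_pos.2 hfx
  have hexpand : (ω ^ 2 * c - (1 - c) / 4) / (t * √t) * 1 ^ 2 + ((1 - c) / 2 + ω * s) / √t * L
      + μ / t ^ 2 * (√t * (1 - c))
      = (ω ^ 2 * c + (μ - 1 / 4) * (1 - c) + t * L * ((1 - c) / 2 + ω * s)) / (t * √t) := by
    field_simp
    rw [Real.sq_sqrt hfx.le]
    ring
  -- `μ - 1/4 ≥ ω²` keeps the leading part above `ω²`; the `Δf` term costs at most `ω² / 2`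
  have hmain : ω ^ 2 ≤ ω ^ 2 * c + (μ - 1 / 4) * (1 - c) := by
    nlinarith [cos_le_one (ω * (log t - α))]
  have hfactor : |(1 - c) / 2 + ω * s| ≤ 1 + ω := by
    have hc : |1 - c| ≤ 2 := abs_le.2
      ⟨by linarith [cos_le_one (ω * (log t - α))], by linarith [neg_one_le_cos (ω * (log t - α))]⟩
    have hs : |s| ≤ 1 := abs_sin_le_one _
    calc |(1 - c) / 2 + ω * s| ≤ |1 - c| / 2 + ω * |s| := by
          simpa [abs_mul, abs_div, abs_of_pos hω] using abs_add_le ((1 - c) / 2) (ω * s)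
      _ ≤ 1 + ω := by nlinarith
  have hperturb : -(ω ^ 2 / 2) ≤ t * L * ((1 - c) / 2 + ω * s) := by
    have hfactor' := mul_le_mul_of_nonneg_left hfactor (by positivity : 0 ≤ t * |L|)
    have hL := mul_le_mul_of_nonneg_left hM hfx.le
    have habs := neg_abs_le (t * L * ((1 - c) / 2 + ω * s))
    rw [abs_mul, abs_mul, abs_of_pos hfx] at habs
    nlinarith
  rw [hexpand]
  exact div_pos (by nlinarith) (by positivity)

theorem not_exists_pos_superHarm_of_ring {N : ℕ} {Ω : Set (EuclideanSpace ℝ (Fin N))}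
    (hΩo : IsOpen Ω) (hΩb : Bornology.IsBounded Ω) {μ ρ ω a b M : ℝ} (hω : 0 < ω)
    (hωμ : ω ^ 2 ≤ μ - 1 / 4) (ha : 0 < a) (hb : b = a * exp (2 * π / ω)) (hbρ : b < ρ)
    (hbM : M * b * (1 + ω) ≤ ω ^ 2 / 2)
    (hδ : ∀ x ∈ ring' Ω a b, ContDiffAt ℝ 2 (bdist Ω) x ∧ ‖gradient (bdist Ω) x‖ = 1 ∧
      |lap (bdist Ω) x| ≤ M)
    (hne : (ring' Ω a b).Nonempty) :
    ¬ ∃ h : EuclideanSpace ℝ (Fin N) → ℝ,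
      SuperHarm Ω μ (collar Ω ρ) h ∧ ∀ x ∈ collar Ω ρ, 0 < h x := by
  rintro ⟨h, hh, hhpos⟩
  obtain ⟨y, hy⟩ := hne
  obtain ⟨w, hw, hneg⟩ := exists_lap_add_nonpos_of_superHarm hΩo hΩb ha hbρ hh hhpos
    (v := fun x => oscProfile ω (log a) (bdist Ω x))
    (fun x hx => ((contDiffAt_oscProfile ω _ (ha.trans_le hx.1)).continuousAt.comp
      continuous_bdist.continuousAt).continuousWithinAt)
    (fun x hx => (contDiffAt_oscProfile ω _ (ha.trans hx.2.1)).comp x (hδ x hx).1)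
    (by rintro x (hx | hx) <;> simp [hx, hb, oscProfile_log_self, oscProfile_mul_exp hω.ne' ha])
    hy (oscProfile_pos hω ha hy.2.1 (hb ▸ hy.2.2))
  obtain ⟨hδw, hgrad, hMw⟩ := hδ w hw
  refine hneg.not_gt (lap_oscProfile_comp_add_pos hδw hgrad (ha.trans hw.2.1) hω hωμ hMw ?_)
  have hM₀ : 0 ≤ M := (abs_nonneg _).trans hMw
  nlinarith [mul_le_mul_of_nonneg_right (mul_le_mul_of_nonneg_right hw.2.2.le hM₀) hω.le]

/-- For `μ > 1/4` the operator `L_μ` admits no positive local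
super-harmonic: for every `ρ ∈ (0, ρ₀)` there is no positive `C²` function `h` on `Ω_ρ`
with `-Δh - (μ/δ²)h ≥ 0` on `Ω_ρ`. -/
theorem stmt0 {N : ℕ} (hN : 2 ≤ N) (Ω : Set (EuclideanSpace ℝ (Fin N)))
    (hΩo : IsOpen Ω) (hΩne : Ω.Nonempty) (hΩb : Bornology.IsBounded Ω)
    (ρ₀ : ℝ) (hρ₀ : GoodCollar Ω ρ₀) (μ : ℝ) (hμ : 1 / 4 < μ) :
    ∀ ρ, 0 < ρ → ρ < ρ₀ →
      ¬ ∃ h : EuclideanSpace ℝ (Fin N) → ℝ,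
          SuperHarm Ω μ (collar Ω ρ) h ∧ ∀ x ∈ collar Ω ρ, 0 < h x := by
  intro ρ hρ hρρ₀
  obtain ⟨-, hδC2, hgrad, M, hM⟩ := hρ₀
  have : Nonempty (Fin N) := ⟨⟨0, by omega⟩⟩
  have hΩc : Ωᶜ.Nonempty := hΩb.compl_nonempty
  obtain ⟨x₀, hx₀⟩ := hΩne
  have hδx₀ := bdist_pos_of_mem hΩo hΩc hx₀
  set ω := √((μ - 1 / 4) / 2)
  have hω : 0 < ω := Real.sqrt_pos.2 (by linarith)
  have hωμ : ω ^ 2 ≤ μ - 1 / 4 := by rw [Real.sq_sqrt (by linarith)]; linarith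
  have hsmall : ∀ᶠ b in 𝓝 (0 : ℝ), b < ρ ∧ b < bdist Ω x₀ ∧ M * b * (1 + ω) < ω ^ 2 / 2 :=
    (eventually_lt_nhds hρ).and ((eventually_lt_nhds hδx₀).and
      ((((continuous_const.mul continuous_id).mul continuous_const).tendsto' 0 0 (by simp)).eventually
        (eventually_lt_nhds (by positivity))))
  obtain ⟨a, ha, hbρ, hbx₀, hbM⟩ := hsmall.exists_pos_mul (exp (2 * π / ω))
  set b := a * exp (2 * π / ω) with hb
  have hab : a < b := lt_mul_of_one_lt_right ha (one_lt_exp_iff.2 (by positivity))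
  obtain ⟨y, hy⟩ := Icc_subset_range_bdist hΩc x₀
    (show (a + b) / 2 ∈ Icc 0 (bdist Ω x₀) from ⟨by linarith, by linarith⟩)
  refine not_exists_pos_superHarm_of_ring hΩo hΩb hω hωμ ha hb hbρ hbM.le (fun x hx => ?_)
    ⟨y, mem_of_bdist_pos (by linarith), by linarith, by linarith⟩
  have hxρ₀ : x ∈ collar Ω ρ₀ := ⟨hx.1, hx.2.2.trans (hbρ.trans hρρ₀)⟩
  exact ⟨hδC2.contDiffAt ((isOpen_collar hΩo ρ₀).mem_nhds hxρ₀), hgrad x hxρ₀, hM x hxρ₀⟩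
end
end

section
/- (Local Hardy inequality, lower bound.) There exists ρ̄ ∈ (0, ρ₀] such that for every ρ ∈ (0, ρ̄) and every smooth function φ : ℝ^N → ℝ with compact support contained in Ω_ρ one has ∫_{Ω_ρ} |∇φ(x)|² dx ≥ (1/4) ∫_{Ω_ρ} φ(x)²/δ(x)² dx. -/
open Set Metric MeasureTheory Real

noncomputable section

open scoped Topology

section Aux

/-- Integral of a partial derivative of a `C¹` compactly supported function on
`Fin (n+1) → ℝ` vanishes. -/
lemma key_pi {n : ℕ} (w : (Fin (n + 1) → ℝ) → ℝ) (hw : ContDiff ℝ 1 w)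
    (hws : HasCompactSupport w) (i : Fin (n + 1)) :
    ∫ x, fderiv ℝ w x (Pi.single i 1) = 0 := by
  classical
  obtain ⟨R₀, hsub₀⟩ := hws.isBounded.subset_ball (0 : Fin (n + 1) → ℝ)
  set R : ℝ := max R₀ 1 with hRdef
  have hR1 : (1 : ℝ) ≤ R := le_max_right _ _
  have hsub : tsupport w ⊆ Metric.ball 0 R :=
    hsub₀.trans (Metric.ball_subset_ball (le_max_left _ _))
  set a : Fin (n + 1) → ℝ := fun _ => -R with hadef
  set b : Fin (n + 1) → ℝ := fun _ => R with hbdef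
  have hle : a ≤ b := fun j => by
    simp only [hadef, hbdef]; linarith
  have hIccsub : tsupport w ⊆ Set.Icc a b := by
    intro y hy
    have h1 : dist y 0 < R := hsub hy
    rw [Set.mem_Icc]
    have habs : ∀ j, |y j| < R := by
      intro j
      have h2 : |y j| ≤ ‖y‖ := by
        simpa [Real.norm_eq_abs] using norm_le_pi_norm y j
      have h3 : ‖y‖ < R := by simpa [dist_zero_right] using h1
      linarith
    constructor <;> intro j
    · have := (abs_le.mp (le_of_lt (habs j))).1
      simpa [hadef] using this
    · have := (abs_le.mp (le_of_lt (habs j))).2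
      simpa [hbdef] using this
  set f : Fin (n + 1) → (Fin (n + 1) → ℝ) → ℝ := fun j => if j = i then w else 0 with hfdef
  set f' : Fin (n + 1) → (Fin (n + 1) → ℝ) → (Fin (n + 1) → ℝ) →L[ℝ] ℝ :=
    fun j x => if j = i then fderiv ℝ w x else 0 with hf'def
  have div_eq : ∀ x, (∑ j, f' j x (Pi.single j 1)) = fderiv ℝ w x (Pi.single i 1) := by
    intro x
    rw [Finset.sum_eq_single_of_mem i (Finset.mem_univ i)]
    · simp [hf'def]
    · intro j _ hj
      simp [hf'def, hj]
  have hcont : Continuous fun x => fderiv ℝ w x (Pi.single i 1) :=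
    (hw.continuous_fderiv one_ne_zero).clm_apply continuous_const
  have hcs : HasCompactSupport fun x => fderiv ℝ w x (Pi.single i 1) := by
    apply hws.mono'
    intro x hx
    have : fderiv ℝ w x ≠ 0 := by
      intro h
      apply hx
      simp [h]
    exact support_fderiv_subset ℝ this
  have hint : MeasureTheory.Integrable (fun x => fderiv ℝ w x (Pi.single i 1)) :=
    hcont.integrable_of_hasCompactSupport hcs
  have key := MeasureTheory.integral_divergence_of_hasFDerivAt_off_countable'
    a b hle f f' (∅ : Set (Fin (n + 1) → ℝ)) Set.countable_empty
    (fun j => by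
      by_cases hj : j = i
      · subst hj; simpa [hfdef] using hw.continuous.continuousOn
      · simp only [hfdef, if_neg hj]; exact continuousOn_const)
    (fun x _ j => by
      by_cases hj : j = i
      · subst hj
        simpa [hfdef, hf'def] using
          ((hw.differentiable one_ne_zero) x).hasFDerivAt
      · simp only [hfdef, hf'def, if_neg hj]
        exact hasFDerivAt_const 0 x)
    (by
      have : (fun x => ∑ j, f' j x (Pi.single j 1)) =
          fun x => fderiv ℝ w x (Pi.single i 1) := funext div_eq
      rw [this]
      exact hint.integrableOn)
  have faces : ∀ (j : Fin (n + 1)) (c : ℝ), |c| = R →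
      ∀ x : Fin n → ℝ, f j ((j.insertNth c x : Fin (n + 1) → ℝ)) = 0 := by
    intro j c hc x
    by_cases hj : j = i
    · subst hj
      simp only [hfdef, if_pos rfl]
      apply image_eq_zero_of_notMem_tsupport
      intro hmem
      have h1 : dist (j.insertNth c x : Fin (n + 1) → ℝ) 0 < R := hsub hmem
      have h2 : |c| ≤ ‖(j.insertNth c x : Fin (n + 1) → ℝ)‖ := by
        have := norm_le_pi_norm (j.insertNth c x : Fin (n + 1) → ℝ) j
        simpa [Fin.insertNth_apply_same] using this
      rw [dist_zero_right] at h1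
      rw [hc] at h2
      linarith
    · simp [hfdef, hj]
  have hRabs : |R| = R := abs_of_pos (lt_of_lt_of_le one_pos hR1)
  have hRabs' : |(-R)| = R := by rw [abs_neg]; exact hRabs
  have rhs0 : (∑ j : Fin (n + 1),
      ((∫ x in Set.Icc (a ∘ j.succAbove) (b ∘ j.succAbove),
          f j ((j.insertNth (b j) x : Fin (n + 1) → ℝ))) -
        ∫ x in Set.Icc (a ∘ j.succAbove) (b ∘ j.succAbove),
          f j ((j.insertNth (a j) x : Fin (n + 1) → ℝ)))) = 0 := by
    apply Finset.sum_eq_zero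
    intro j _
    have h1 : ∀ x : Fin n → ℝ, f j ((j.insertNth (b j) x : Fin (n + 1) → ℝ)) = 0 := faces j R hRabs
    have h2 : ∀ x : Fin n → ℝ, f j ((j.insertNth (a j) x : Fin (n + 1) → ℝ)) = 0 := faces j (-R) hRabs'
    simp [h1, h2]
  rw [rhs0] at key
  have lhs_eq : (∫ x in Set.Icc a b, ∑ j, f' j x (Pi.single j 1)) =
      ∫ x, fderiv ℝ w x (Pi.single i 1) := by
    have h1 : (fun x => ∑ j, f' j x (Pi.single j 1)) =
        fun x => fderiv ℝ w x (Pi.single i 1) := funext div_eq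
    rw [h1]
    apply MeasureTheory.setIntegral_eq_integral_of_forall_compl_eq_zero
    intro x hx
    have hxn : x ∉ tsupport w := fun h => hx (hIccsub h)
    have : fderiv ℝ w x = 0 := by
      by_contra h
      exact hxn (support_fderiv_subset ℝ h)
    simp [this]
  rw [lhs_eq] at key
  exact key

/-- Integral of a directional derivative of a `C¹` compactly supported function on
`EuclideanSpace ℝ (Fin N)` vanishes. -/
lemma key_euc {N : ℕ} (hN : N ≠ 0) (u : EuclideanSpace ℝ (Fin N) → ℝ)
    (hu : ContDiff ℝ 1 u) (hsupp : HasCompactSupport u) (i : Fin N) :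
    ∫ x, fderiv ℝ u x (EuclideanSpace.single i 1) = 0 := by
  obtain ⟨n, rfl⟩ : ∃ n, N = n + 1 :=
    ⟨N - 1, (Nat.succ_pred_eq_of_pos (Nat.pos_of_ne_zero hN)).symm⟩
  have hw : ContDiff ℝ 1 (u ∘ (PiLp.continuousLinearEquiv 2 ℝ
      (fun _ : Fin (n + 1) => ℝ)).symm) :=
    hu.comp (PiLp.continuousLinearEquiv 2 ℝ (fun _ : Fin (n + 1) => ℝ)).symm.contDiff
  have hws : HasCompactSupport (u ∘ (PiLp.continuousLinearEquiv 2 ℝ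
      (fun _ : Fin (n + 1) => ℝ)).symm) :=
    hsupp.comp_homeomorph (PiLp.continuousLinearEquiv 2 ℝ _).symm.toHomeomorph
  have key := key_pi _ hw hws i
  have hfd : ∀ y : Fin (n + 1) → ℝ,
      fderiv ℝ (u ∘ (PiLp.continuousLinearEquiv 2 ℝ (fun _ : Fin (n + 1) => ℝ)).symm) y
          (Pi.single i 1) =
        fderiv ℝ u ((PiLp.continuousLinearEquiv 2 ℝ (fun _ : Fin (n + 1) => ℝ)).symm y)
          (EuclideanSpace.single i 1) := by
    intro y
    have h1 := HasFDerivAt.comp (𝕜 := ℝ) y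
      (((hu.differentiable one_ne_zero)
        ((PiLp.continuousLinearEquiv 2 ℝ (fun _ : Fin (n + 1) => ℝ)).symm y)).hasFDerivAt)
      ((PiLp.continuousLinearEquiv 2 ℝ (fun _ : Fin (n + 1) => ℝ)).symm.hasFDerivAt)
    rw [h1.fderiv]
    rfl
  simp only [hfd] at key
  have hmp := (EuclideanSpace.volume_preserving_symm_measurableEquiv_toLp (Fin (n + 1))).symm
  have hcomp := hmp.integral_comp' (f := MeasurableEquiv.toLp 2 (Fin (n + 1) → ℝ))
    (g := fun x => fderiv ℝ u x (EuclideanSpace.single i 1))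
  rw [← hcomp]
  exact key

lemma norm_gradient_sq {N : ℕ} (f : EuclideanSpace ℝ (Fin N) → ℝ)
    (x : EuclideanSpace ℝ (Fin N)) :
    ‖gradient f x‖ ^ 2 = ∑ i, (fderiv ℝ f x (EuclideanSpace.single i 1)) ^ 2 := by
  have h1 : ∀ i, gradient f x i = fderiv ℝ f x (EuclideanSpace.single i 1) := by
    intro i
    have h := InnerProductSpace.toDual_symm_apply (𝕜 := ℝ)
      (E := EuclideanSpace ℝ (Fin N)) (y := fderiv ℝ f x) (x := EuclideanSpace.single i 1)
    rw [gradient] at *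
    rw [← h]
    rw [real_inner_comm]
    simp [EuclideanSpace.inner_single_left]
  have h2 : ‖gradient f x‖ ^ 2 = ∑ i, (gradient f x i) ^ 2 := by
    rw [EuclideanSpace.norm_eq, Real.sq_sqrt (by positivity)]
    exact Finset.sum_congr rfl fun i _ => sq_abs _
  rw [h2]
  exact Finset.sum_congr rfl fun i _ => by rw [h1 i]

lemma scalar_ineq (t c Δ M' : ℝ) (ht : 0 < t) (hc : 1 ≤ c) (hM : M' = 2 * (c - 1))
    (hΔ : |Δ| ≤ M') (h2ct : 2 * c ^ 2 * t ≤ 1) :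
    ((2 * t)⁻¹ - c) ^ 2 - 2 / (2 * t) ^ 2 + ((2 * t)⁻¹ - c) * Δ ≤ -(1 / (4 * t ^ 2)) := by
  obtain ⟨hΔ1, hΔ2⟩ := abs_le.mp hΔ
  have h2t : (0 : ℝ) < 2 * t := by linarith
  have hinv : (2 * t)⁻¹ = 1 / (2 * t) := (one_div _).symm
  have hcsq : c ≤ c ^ 2 := by nlinarith
  have hinvt : c ^ 2 ≤ (2 * t)⁻¹ := by
    rw [hinv, le_div_iff₀ h2t]
    nlinarith
  have hg0 : 0 ≤ (2 * t)⁻¹ - c := by nlinarith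
  have hgΔ : ((2 * t)⁻¹ - c) * Δ ≤ ((2 * t)⁻¹) * M' := by
    have hM0 : 0 ≤ M' := le_trans (abs_nonneg Δ) hΔ
    calc ((2 * t)⁻¹ - c) * Δ ≤ ((2 * t)⁻¹ - c) * M' := by nlinarith
    _ ≤ ((2 * t)⁻¹) * M' := by nlinarith
  have hne : (2 * t) ≠ 0 := ne_of_gt h2t
  have e1 : ((2 * t)⁻¹) ^ 2 = 1 / (4 * t ^ 2) := by
    field_simp; ring
  have e2 : 2 / (2 * t) ^ 2 = 2 * (1 / (4 * t ^ 2)) := by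
    field_simp; ring
  have e3 : 1 / (4 * t ^ 2) = ((2 * t)⁻¹) ^ 2 := e1.symm
  -- reduce to inequality in u := (2 t)⁻¹
  set u := (2 * t)⁻¹ with hudef
  have hu : 2 * c ^ 2 ≤ 2 * u := by
    have : c ^ 2 ≤ u := hinvt
    linarith
  calc (u - c) ^ 2 - 2 / (2 * t) ^ 2 + (u - c) * Δ
      ≤ (u - c) ^ 2 - 2 * u ^ 2 + u * M' := by rw [e2, e3]; linarith [hgΔ]
    _ = -u ^ 2 + (-2 * u * c + u * M' + c ^ 2) := by ring
    _ ≤ -u ^ 2 := by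
        rw [hM]
        nlinarith [hinvt, hcsq, hc]
    _ = -(1 / (4 * t ^ 2)) := by rw [e3]

end Aux

set_option maxHeartbeats 2000000 in
/-- (Local Hardy inequality, lower bound.) There is `ρ̄ ∈ (0, ρ₀]` such
that for every `ρ ∈ (0, ρ̄)` and every smooth compactly supported `φ` with support in
`Ω_ρ` one has `∫ |∇φ|² ≥ (1/4) ∫ φ²/δ²`. -/
theorem stmt1 {N : ℕ} (hN : 2 ≤ N) (Ω : Set (EuclideanSpace ℝ (Fin N)))
    (hΩo : IsOpen Ω) (hΩne : Ω.Nonempty) (hΩb : Bornology.IsBounded Ω)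
    (ρ₀ : ℝ) (hρ₀ : GoodCollar Ω ρ₀) :
    ∃ ρbar, 0 < ρbar ∧ ρbar ≤ ρ₀ ∧
      ∀ ρ, 0 < ρ → ρ < ρbar →
        ∀ φ : EuclideanSpace ℝ (Fin N) → ℝ, ContDiff ℝ (⊤ : ℕ∞) φ → HasCompactSupport φ →
          tsupport φ ⊆ collar Ω ρ →
          (1 / 4) * ∫ x in collar Ω ρ, (φ x) ^ 2 / (bdist Ω x) ^ 2 ≤
            ∫ x in collar Ω ρ, ‖gradient φ x‖ ^ 2 := by
  classical
  obtain ⟨hρ₀pos, hd2, hgrad, M, hM⟩ := hρ₀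
  set M' : ℝ := max M 0 with hM'def
  set c : ℝ := M' / 2 + 1 with hcdef
  have hM'0 : (0:ℝ) ≤ M' := le_max_right _ _
  have hMM' : M ≤ M' := le_max_left _ _
  have hc1 : (1:ℝ) ≤ c := by simp only [hcdef]; linarith
  have hc0 : (0:ℝ) < c := lt_of_lt_of_le one_pos hc1
  have hM'c : M' = 2 * (c - 1) := by simp only [hcdef]; ring
  have hN0 : N ≠ 0 := by omega
  refine ⟨min ρ₀ (1 / (2 * c ^ 2)), lt_min hρ₀pos (by positivity), min_le_left _ _, ?_⟩
  intro ρ hρ0 hρlt φ hφsm hφcs hφsupp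
  have hρρ₀ : ρ ≤ ρ₀ := le_of_lt (lt_of_lt_of_le hρlt (min_le_left _ _))
  have hρc : ρ ≤ 1 / (2 * c ^ 2) := le_of_lt (lt_of_lt_of_le hρlt (min_le_right _ _))
  -- basic facts about the distance function
  have hdcont : Continuous (bdist Ω) := by
    have : bdist Ω = fun x => Metric.infDist x Ωᶜ := rfl
    rw [this]
    exact Metric.continuous_infDist_pt _
  have hVopen : IsOpen (collar Ω ρ₀) := by
    have hcoll : collar Ω ρ₀ = Ω ∩ bdist Ω ⁻¹' (Set.Iio ρ₀) := by
      ext y; simp [collar, Set.mem_setOf_eq, Set.mem_preimage]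
    rw [hcoll]
    exact hΩo.inter (isOpen_Iio.preimage hdcont)
  have hUopen : IsOpen (collar Ω ρ) := by
    have hcoll : collar Ω ρ = Ω ∩ bdist Ω ⁻¹' (Set.Iio ρ) := by
      ext y; simp [collar, Set.mem_setOf_eq, Set.mem_preimage]
    rw [hcoll]
    exact hΩo.inter (isOpen_Iio.preimage hdcont)
  have hUV : collar Ω ρ ⊆ collar Ω ρ₀ := fun y hy => ⟨hy.1, lt_of_lt_of_le hy.2 hρρ₀⟩
  have hΩc_ne : Ωᶜ.Nonempty := by
    by_contra h
    rw [Set.not_nonempty_iff_eq_empty, Set.compl_empty_iff] at h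
    obtain ⟨r, hr⟩ := hΩb.subset_ball (0 : EuclideanSpace ℝ (Fin N))
    set i0 : Fin N := ⟨0, by omega⟩
    have hp : ((r + 1) • EuclideanSpace.single i0 (1:ℝ)) ∈ Ω := by rw [h]; trivial
    have h2 := hr hp
    rw [Metric.mem_ball, dist_zero_right, norm_smul] at h2
    simp only [EuclideanSpace.norm_single, norm_one, mul_one] at h2
    have := le_abs_self (r + 1)
    simp only [Real.norm_eq_abs] at h2
    linarith
  have hdpos : ∀ x ∈ Ω, 0 < bdist Ω x := by
    intro x hx
    exact (IsClosed.notMem_iff_infDist_pos hΩo.isClosed_compl hΩc_ne).mp (by simpa using hx)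
  have hKU : tsupport φ ⊆ collar Ω ρ := hφsupp
  have hfd1 : ContDiffOn ℝ 1 (fderiv ℝ (bdist Ω)) (collar Ω ρ₀) :=
    hd2.fderiv_of_isOpen hVopen (by norm_num)
  have hφ1 : ContDiff ℝ 1 φ := hφsm.of_le (by simp)
  have hfd0 : ∀ (f : EuclideanSpace ℝ (Fin N) → ℝ) y, y ∉ tsupport f → fderiv ℝ f y = 0 := by
    intro f y hy
    by_contra h
    exact hy (support_fderiv_subset ℝ h)
  -- the vector field
  set G : Fin N → EuclideanSpace ℝ (Fin N) → ℝ :=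
    fun i y => φ y * φ y * ((2 * bdist Ω y)⁻¹ - c) *
      fderiv ℝ (bdist Ω) y (EuclideanSpace.single i 1) with hGdef
  have hGcd : ∀ i, ContDiff ℝ 1 (G i) := by
    intro i
    rw [contDiff_iff_contDiffAt]
    intro x
    by_cases hx : x ∈ collar Ω ρ₀
    · have hmem : collar Ω ρ₀ ∈ 𝓝 x := hVopen.mem_nhds hx
      have h1 : ContDiffOn ℝ 1 (fun y => (2 * bdist Ω y)⁻¹ - c) (collar Ω ρ₀) := by
        apply ContDiffOn.sub _ contDiffOn_const
        apply ContDiffOn.inv (contDiffOn_const.mul (hd2.of_le one_le_two))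
        intro y hy
        have := hdpos y hy.1
        positivity
      have h2 : ContDiffOn ℝ 1
          (fun y => fderiv ℝ (bdist Ω) y (EuclideanSpace.single i 1)) (collar Ω ρ₀) :=
        hfd1.clm_apply contDiffOn_const
      have hG : ContDiffOn ℝ 1 (G i) (collar Ω ρ₀) := by
        rw [hGdef]
        exact ((hφ1.contDiffOn.mul hφ1.contDiffOn).mul h1).mul h2
      exact hG.contDiffAt hmem
    · have hxK : x ∉ tsupport φ := fun h => hx (hUV (hKU h))
      have hev : (fun y => G i y) =ᶠ[𝓝 x] fun _ => (0:ℝ) := by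
        filter_upwards [((isClosed_tsupport φ).isOpen_compl.mem_nhds hxK)] with y hy
        simp [hGdef, image_eq_zero_of_notMem_tsupport hy]
      exact (contDiffAt_const (c := (0:ℝ))).congr_of_eventuallyEq hev
  have hts : ∀ i, tsupport (G i) ⊆ tsupport φ := by
    intro i
    apply closure_minimal _ (isClosed_tsupport φ)
    intro y hy
    apply subset_closure
    intro h0
    exact hy (by simp [hGdef, h0])
  have hGsupp : ∀ i, HasCompactSupport (G i) := by
    intro i
    apply hφcs.mono'
    intro y hy
    by_contra h
    exact hy (by simp [hGdef, image_eq_zero_of_notMem_tsupport h])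
  -- the divergence
  set D : EuclideanSpace ℝ (Fin N) → ℝ :=
    fun x => ∑ i, fderiv ℝ (G i) x (EuclideanSpace.single i 1) with hDdef
  have hDconts : ∀ i, Continuous
      (fun x => fderiv ℝ (G i) x (EuclideanSpace.single i 1)) := fun i =>
    ((hGcd i).continuous_fderiv one_ne_zero).clm_apply continuous_const
  have hDcont : Continuous D := by
    rw [hDdef]; exact continuous_finset_sum _ fun i _ => hDconts i
  have hDeq0 : ∀ x, x ∉ tsupport φ → D x = 0 := by
    intro x hx
    rw [hDdef]
    apply Finset.sum_eq_zero
    intro i _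
    have h1 : x ∉ tsupport (G i) := fun h => hx (hts i h)
    rw [hfd0 (G i) x h1]
    rfl
  have hIDi : ∀ i, MeasureTheory.Integrable
      (fun x => fderiv ℝ (G i) x (EuclideanSpace.single i 1)) := by
    intro i
    apply (hDconts i).integrable_of_hasCompactSupport
    apply hφcs.mono'
    intro y hy
    by_contra h
    have h1 : y ∉ tsupport (G i) := fun hh => h (hts i hh)
    apply hy
    show fderiv ℝ (G i) y (EuclideanSpace.single i 1) = 0
    rw [hfd0 (G i) y h1]
    simp
  have hDint0 : ∫ x, D x = 0 := by
    rw [hDdef]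
    rw [MeasureTheory.integral_finset_sum _ (fun i _ => hIDi i)]
    exact Finset.sum_eq_zero fun i _ => key_euc hN0 (G i) (hGcd i) (hGsupp i) i
  have hUmeas : MeasurableSet (collar Ω ρ) := hUopen.measurableSet
  have hDU : ∫ x in collar Ω ρ, D x = 0 := by
    rw [MeasureTheory.setIntegral_eq_integral_of_forall_compl_eq_zero
      (fun x hx => hDeq0 x (fun h => hx (hKU h)))]
    exact hDint0
  have hID : MeasureTheory.Integrable D := by
    apply hDcont.integrable_of_hasCompactSupport
    apply hφcs.mono'
    intro y hy
    by_contra h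
    exact hy (hDeq0 y h)
  -- integrability of the gradient square
  have hgradcont : Continuous (fun x => ‖gradient φ x‖ ^ 2) := by
    have h1 : (fun x => ‖gradient φ x‖ ^ 2) =
        fun x => ‖(InnerProductSpace.toDual ℝ (EuclideanSpace ℝ (Fin N))).symm
          (fderiv ℝ φ x)‖ ^ 2 := rfl
    rw [h1]
    exact (((InnerProductSpace.toDual ℝ (EuclideanSpace ℝ (Fin N))).symm.continuous.comp
      (hφ1.continuous_fderiv one_ne_zero)).norm.pow 2)
  have hgrad0 : ∀ y, y ∉ tsupport φ → ‖gradient φ y‖ ^ 2 = 0 := by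
    intro y hy
    have h1 : gradient φ y = (InnerProductSpace.toDual ℝ
      (EuclideanSpace ℝ (Fin N))).symm (fderiv ℝ φ y) := rfl
    rw [h1, hfd0 φ y hy]
    simp
  have hIgrad : MeasureTheory.Integrable (fun x => ‖gradient φ x‖ ^ 2) := by
    apply hgradcont.integrable_of_hasCompactSupport
    apply hφcs.mono'
    intro y hy
    by_contra h
    exact hy (hgrad0 y h)
  -- integrability of φ²/δ²
  set f2 : EuclideanSpace ℝ (Fin N) → ℝ := fun x => φ x ^ 2 / bdist Ω x ^ 2 with hf2def
  have hf20 : ∀ y, y ∉ tsupport φ → f2 y = 0 := by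
    intro y hy
    simp [hf2def, image_eq_zero_of_notMem_tsupport hy]
  have hf2cont : Continuous f2 := by
    rw [continuous_iff_continuousAt]
    intro x
    by_cases hx : x ∈ Ω
    · have hne : bdist Ω x ^ 2 ≠ 0 := by
        have := hdpos x hx
        positivity
      exact ((hφsm.continuous.pow 2).continuousAt).div
        ((hdcont.pow 2).continuousAt) hne
    · have hxK : x ∉ tsupport φ := fun h => hx ((hKU h).1)
      have hev : f2 =ᶠ[𝓝 x] fun _ => (0:ℝ) := by
        filter_upwards [((isClosed_tsupport φ).isOpen_compl.mem_nhds hxK)] with y hy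
        exact hf20 y hy
      exact hev.continuousAt
  have hIf2 : MeasureTheory.Integrable f2 := by
    apply hf2cont.integrable_of_hasCompactSupport
    apply hφcs.mono'
    intro y hy
    by_contra h
    exact hy (hf20 y h)
  -- pointwise inequality
  have hpt : ∀ x ∈ collar Ω ρ, D x + (1/4) * f2 x ≤ ‖gradient φ x‖ ^ 2 := by
    intro x hx
    obtain ⟨hxΩ, hxρ⟩ := hx
    have hxV : x ∈ collar Ω ρ₀ := ⟨hxΩ, lt_of_lt_of_le hxρ hρρ₀⟩
    have ht0 : 0 < bdist Ω x := hdpos x hxΩ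
    set t := bdist Ω x with htdef
    have htρ : t < ρ := hxρ
    have h2t0 : (0:ℝ) < 2 * t := by linarith
    have h2tne : (2:ℝ) * t ≠ 0 := ne_of_gt h2t0
    have hmemV : collar Ω ρ₀ ∈ 𝓝 x := hVopen.mem_nhds hxV
    have hdAt : DifferentiableAt ℝ (bdist Ω) x :=
      ((hd2.differentiableOn two_ne_zero) x hxV).differentiableAt hmemV
    have hDd : HasFDerivAt (bdist Ω) (fderiv ℝ (bdist Ω) x) x := hdAt.hasFDerivAt
    have hφAt : HasFDerivAt φ (fderiv ℝ φ x) x := (hφ1.differentiable one_ne_zero x).hasFDerivAt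
    have hBAt : ∀ i : Fin N, HasFDerivAt
        (fun y => fderiv ℝ (bdist Ω) y (EuclideanSpace.single i 1))
        (fderiv ℝ (fun y => fderiv ℝ (bdist Ω) y (EuclideanSpace.single i 1)) x) x := by
      intro i
      have h1 : DifferentiableAt ℝ (fderiv ℝ (bdist Ω)) x :=
        ((hfd1.differentiableOn one_ne_zero) x hxV).differentiableAt hmemV
      exact (h1.clm_apply (differentiableAt_const _)).hasFDerivAt
    have hg1 : HasDerivAt (fun s : ℝ => (2 * s)⁻¹ - c) (-(2 * 1) / (2 * t) ^ 2) t :=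
      (((hasDerivAt_id t).const_mul 2).inv h2tne).sub_const c
    have hgf : HasFDerivAt (fun y => (2 * bdist Ω y)⁻¹ - c)
        ((-(2 * 1) / (2 * t) ^ 2) • fderiv ℝ (bdist Ω) x) x :=
      by have := hg1.comp_hasFDerivAt x hDd; exact this
    have hGf : ∀ i : Fin N, fderiv ℝ (G i) x (EuclideanSpace.single i 1) =
        2 * (φ x * ((2 * t)⁻¹ - c)) *
          (fderiv ℝ φ x (EuclideanSpace.single i 1) *
            fderiv ℝ (bdist Ω) x (EuclideanSpace.single i 1))
        + (φ x * φ x * (-(2 * 1) / (2 * t) ^ 2)) *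
            (fderiv ℝ (bdist Ω) x (EuclideanSpace.single i 1)) ^ 2
        + (φ x * φ x * ((2 * t)⁻¹ - c)) *
            (fderiv ℝ (fun y => fderiv ℝ (bdist Ω) y (EuclideanSpace.single i 1)) x
              (EuclideanSpace.single i 1)) := by
      intro i
      have hmul1 : HasFDerivAt (fun y => φ y * φ y)
          (φ x • fderiv ℝ φ x + φ x • fderiv ℝ φ x) x := hφAt.mul hφAt
      have hmul2 := hmul1.mul hgf
      have hmul3 := hmul2.mul (hBAt i)
      have hGi : G i = fun y => φ y * φ y * ((2 * bdist Ω y)⁻¹ - c) *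
          fderiv ℝ (bdist Ω) y (EuclideanSpace.single i 1) := by rw [hGdef]
      rw [hGi, (show HasFDerivAt (fun y => φ y * φ y * ((2 * bdist Ω y)⁻¹ - c) *
          fderiv ℝ (bdist Ω) y (EuclideanSpace.single i 1)) _ x from hmul3).fderiv]
      simp only [ContinuousLinearMap.add_apply, ContinuousLinearMap.smul_apply, smul_eq_mul,
        Pi.mul_apply]
      ring
    have hA : ‖gradient φ x‖ ^ 2 =
        ∑ i, (fderiv ℝ φ x (EuclideanSpace.single i 1)) ^ 2 := norm_gradient_sq φ x
    have hB2 : ∑ i, (fderiv ℝ (bdist Ω) x (EuclideanSpace.single i 1)) ^ 2 = 1 := by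
      have h1 := norm_gradient_sq (bdist Ω) x
      have h2 := hgrad x hxV
      have h3 : ∀ i : Fin N, fderiv ℝ (bdist Ω) x (EuclideanSpace.single i 1) =
          fderiv ℝ (bdist Ω) x (EuclideanSpace.single i 1) := fun _ => rfl
      rw [← h1, h2]
      norm_num
    have hC : ∑ i, fderiv ℝ (fun y => fderiv ℝ (bdist Ω) y (EuclideanSpace.single i 1)) x
        (EuclideanSpace.single i 1) = lap (bdist Ω) x := rfl
    have hΔ : |lap (bdist Ω) x| ≤ M' := le_trans (hM x hxV) hMM'
    have h2c2 : (0:ℝ) < 2 * c ^ 2 := by positivity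
    have hct : 2 * c ^ 2 * t ≤ 1 := by
      rw [le_div_iff₀ h2c2] at hρc
      nlinarith
    have hscal := scalar_ineq t c (lap (bdist Ω) x) M' ht0 hc1 hM'c hΔ hct
    have hCS : ∑ i, (2 * (φ x * ((2 * t)⁻¹ - c)) *
          (fderiv ℝ φ x (EuclideanSpace.single i 1) *
            fderiv ℝ (bdist Ω) x (EuclideanSpace.single i 1)))
        ≤ ∑ i, ((fderiv ℝ φ x (EuclideanSpace.single i 1)) ^ 2 +
            (φ x * ((2 * t)⁻¹ - c)) ^ 2 *
              (fderiv ℝ (bdist Ω) x (EuclideanSpace.single i 1)) ^ 2) :=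
      Finset.sum_le_sum fun i _ => by
        nlinarith [sq_nonneg (fderiv ℝ φ x (EuclideanSpace.single i 1) -
          (φ x * ((2 * t)⁻¹ - c)) * fderiv ℝ (bdist Ω) x (EuclideanSpace.single i 1))]
    have hsum : D x = (∑ i, (2 * (φ x * ((2 * t)⁻¹ - c)) *
          (fderiv ℝ φ x (EuclideanSpace.single i 1) *
            fderiv ℝ (bdist Ω) x (EuclideanSpace.single i 1))))
        + (φ x * φ x * (-(2 * 1) / (2 * t) ^ 2)) *
            (∑ i, (fderiv ℝ (bdist Ω) x (EuclideanSpace.single i 1)) ^ 2)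
        + (φ x * φ x * ((2 * t)⁻¹ - c)) *
            (∑ i, fderiv ℝ (fun y => fderiv ℝ (bdist Ω) y (EuclideanSpace.single i 1)) x
              (EuclideanSpace.single i 1)) := by
      have hsum0 : D x = ∑ i, (2 * (φ x * ((2 * t)⁻¹ - c)) *
          (fderiv ℝ φ x (EuclideanSpace.single i 1) *
            fderiv ℝ (bdist Ω) x (EuclideanSpace.single i 1))
        + (φ x * φ x * (-(2 * 1) / (2 * t) ^ 2)) *
            (fderiv ℝ (bdist Ω) x (EuclideanSpace.single i 1)) ^ 2
        + (φ x * φ x * ((2 * t)⁻¹ - c)) *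
            (fderiv ℝ (fun y => fderiv ℝ (bdist Ω) y (EuclideanSpace.single i 1)) x
              (EuclideanSpace.single i 1))) := by
        simp only [hDdef]
        exact Finset.sum_congr rfl fun i _ => hGf i
      rw [hsum0, Finset.sum_add_distrib, Finset.sum_add_distrib, ← Finset.mul_sum,
        ← Finset.mul_sum, ← Finset.mul_sum]
    rw [hB2, hC] at hsum
    have hCS2 : ∑ i, ((fderiv ℝ φ x (EuclideanSpace.single i 1)) ^ 2 +
          (φ x * ((2 * t)⁻¹ - c)) ^ 2 *
            (fderiv ℝ (bdist Ω) x (EuclideanSpace.single i 1)) ^ 2)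
        = (∑ i, (fderiv ℝ φ x (EuclideanSpace.single i 1)) ^ 2) +
            (φ x * ((2 * t)⁻¹ - c)) ^ 2 := by
      rw [Finset.sum_add_distrib, ← Finset.mul_sum, hB2, mul_one]
    rw [hCS2] at hCS
    have hmulscal := mul_le_mul_of_nonneg_left hscal (sq_nonneg (φ x))
    have e1 : φ x ^ 2 * (((2 * t)⁻¹ - c) ^ 2 - 2 / (2 * t) ^ 2 + ((2 * t)⁻¹ - c) * lap (bdist Ω) x)
        = (φ x * ((2 * t)⁻¹ - c)) ^ 2 + (φ x * φ x * (-(2 * 1) / (2 * t) ^ 2)) * 1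
          + (φ x * φ x * ((2 * t)⁻¹ - c)) * lap (bdist Ω) x := by ring
    have e2 : φ x ^ 2 * (-(1 / (4 * t ^ 2))) = -((1/4) * f2 x) := by
      have ht2 : (t:ℝ) ^ 2 ≠ 0 := pow_ne_zero 2 (ne_of_gt ht0)
      simp only [hf2def, ← htdef]
      field_simp
    rw [e1] at hmulscal
    rw [hA]
    rw [e2] at hmulscal
    linarith [hsum, hCS, hmulscal]
  -- putting everything together
  have hmono := MeasureTheory.setIntegral_mono_on
    (hID.integrableOn.add ((hIf2.integrableOn).const_mul (1/4)))
    hIgrad.integrableOn hUmeas hpt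
  have hsplit : ∫ x in collar Ω ρ, (D x + (1/4) * f2 x) =
      (∫ x in collar Ω ρ, D x) + (1/4) * ∫ x in collar Ω ρ, f2 x := by
    rw [MeasureTheory.integral_add hID.integrableOn ((hIf2.integrableOn).const_mul (1/4)),
      MeasureTheory.integral_const_mul]
  have hfinal : ∫ x in collar Ω ρ, (D x + (1/4) * f2 x) ≤
      ∫ x in collar Ω ρ, ‖gradient φ x‖ ^ 2 := hmono
  rw [hsplit, hDU] at hfinal
  simp only [hf2def] at hfinal
  linarith [hfinal]
end
end
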